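/- arXiv:2308.04742 — 4 statements merged into one kernel-verified Lean document; each statement's English description precedes it below -/
import Mathlib

section
/- Let c ∈ ℝ and let a < b and a' < b' be real numbers with (a,b) ≠ (a',b'). Then the lower semicircles S(a,b,c) and S(a',b',c) have a common point with second coordinate strictly less than c if and only if the pairs (a,b) and (a',b') interleave; moreover, in that case their full intersection S(a,b,c) ∩ S(a',b',c) consists of exactly one point, and that point has second coordinate strictly less than c. -/
/-- The point of the Euclidean plane with coordinates `(x, y)`. -/
noncomputable def planePoint (x y : ℝ) : EuclideanSpace ℝ (Fin 2) :=
  (WithLp.equiv 2 (Fin 2 → ℝ)).symm ![x, y]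

/-- The lower semicircle `S(a, b, c)`: the half of the circle with diameter endpoints
`(a, c)` and `(b, c)` lying on or below the line `y = c`. -/
noncomputable def lowerSemicircle (a b c : ℝ) : Set (EuclideanSpace ℝ (Fin 2)) :=
  {p | ‖p - planePoint ((a + b) / 2) c‖ = (b - a) / 2 ∧ p 1 ≤ c}

/-- Two ordered pairs `(a, b)` and `(a', b')` of reals (with `a < b`, `a' < b'`)
interleave if `a < a' < b < b'` or `a' < a < b' < b`. -/
def Interleave (a b a' b' : ℝ) : Prop :=
  (a < a' ∧ a' < b ∧ b < b') ∨ (a' < a ∧ a < b' ∧ b' < b)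

lemma point_eq (p : EuclideanSpace ℝ (Fin 2)) : p = planePoint (p 0) (p 1) := by
  ext i; fin_cases i <;> rfl

lemma norm_planePoint_sub (x y u v : ℝ) :
    ‖planePoint x y - planePoint u v‖ = Real.sqrt ((x-u)^2 + (y-v)^2) := by
  rw [EuclideanSpace.norm_eq]
  congr 1
  simp [planePoint, Fin.sum_univ_two, sq_abs]

lemma mem_lowerSemicircle (a b c x y : ℝ) (hab : a < b) :
    planePoint x y ∈ lowerSemicircle a b c ↔
      ((x - (a+b)/2)^2 + (y-c)^2 = ((b-a)/2)^2 ∧ y ≤ c) := by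
  have h1 : (planePoint x y) 1 = y := rfl
  simp only [lowerSemicircle, Set.mem_setOf_eq, h1, norm_planePoint_sub]
  constructor
  · rintro ⟨h, hy⟩
    refine ⟨?_, hy⟩
    have := congrArg (· ^ 2) h
    simpa [Real.sq_sqrt (by positivity : (0:ℝ) ≤ (x - (a+b)/2)^2 + (y-c)^2)] using this
  · rintro ⟨h, hy⟩
    refine ⟨?_, hy⟩
    rw [h, Real.sqrt_sq (by linarith)]

lemma interleave_iff_prod_pos (a b a' b' : ℝ) (hab : a < b) (hab' : a' < b') :
    Interleave a b a' b' ↔ 0 < (a'-a)*(b-a')*(b'-b)*(b'-a) := by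
  constructor
  · rintro (⟨h1, h2, h3⟩ | ⟨h1, h2, h3⟩)
    · nlinarith [mul_pos (mul_pos (mul_pos (show (0:ℝ) < a'-a by linarith)
        (show (0:ℝ) < b-a' by linarith)) (show (0:ℝ) < b'-b by linarith))
        (show (0:ℝ) < b'-a by linarith)]
    · nlinarith [mul_pos (mul_pos (mul_pos (show (0:ℝ) < a-a' by linarith)
        (show (0:ℝ) < b-b' by linarith)) (show (0:ℝ) < b-a' by linarith))
        (show (0:ℝ) < b'-a by linarith)]
  · intro h
    rcases lt_trichotomy a a' with h1 | h1 | h1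
    · left
      refine ⟨h1, ?_, ?_⟩
      · by_contra hc; push_neg at hc
        nlinarith [mul_nonneg (mul_nonneg (mul_nonneg (show (0:ℝ) ≤ a'-a by linarith)
          (show (0:ℝ) ≤ b'-b by linarith)) (show (0:ℝ) ≤ a'-b by linarith))
          (show (0:ℝ) ≤ b'-a by linarith)]
      · by_contra hc; push_neg at hc
        nlinarith [mul_nonneg (mul_nonneg (mul_nonneg (show (0:ℝ) ≤ a'-a by linarith)
          (show (0:ℝ) ≤ b-a' by linarith)) (show (0:ℝ) ≤ b-b' by linarith))
          (show (0:ℝ) ≤ b'-a by linarith)]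
    · exfalso
      rw [← h1] at h
      have h0 : (a-a)*(b-a)*(b'-b)*(b'-a) = 0 := by ring
      linarith
    · right
      refine ⟨h1, ?_, ?_⟩
      · by_contra hc; push_neg at hc
        nlinarith [mul_nonneg (mul_nonneg (mul_nonneg (show (0:ℝ) ≤ a-a' by linarith)
          (show (0:ℝ) ≤ b-a' by linarith)) (show (0:ℝ) ≤ b-b' by linarith))
          (show (0:ℝ) ≤ a-b' by linarith)]
      · by_contra hc; push_neg at hc
        nlinarith [mul_nonneg (mul_nonneg (mul_nonneg (show (0:ℝ) ≤ a-a' by linarith)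
          (show (0:ℝ) ≤ b-a' by linarith)) (show (0:ℝ) ≤ b'-b by linarith))
          (show (0:ℝ) ≤ b'-a by linarith)]

/-- Two distinct lower semicircles over the baseline `y = c` have a common point strictly
below the baseline if and only if their endpoint pairs interleave; moreover, in that case
their full intersection consists of exactly one point, and that point lies strictly below
the baseline. -/
theorem lowerSemicircles_cross_iff_interleave
    (c a b a' b' : ℝ) (hab : a < b) (hab' : a' < b') (hne : (a, b) ≠ (a', b')) :
    ((∃ p ∈ lowerSemicircle a b c ∩ lowerSemicircle a' b' c, p 1 < c) ↔
      Interleave a b a' b') ∧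
    (Interleave a b a' b' →
      ∃ p : EuclideanSpace ℝ (Fin 2),
        lowerSemicircle a b c ∩ lowerSemicircle a' b' c = {p} ∧ p 1 < c) := by
  by_cases hd0 : (a'+b')/2 - (a+b)/2 = 0
  · -- same center: intersection empty, no interleave
    have hrr : (b-a)/2 ≠ (b'-a')/2 := by
      intro h
      exact hne (by simp only [Prod.mk.injEq]; constructor <;> linarith)
    have hcen : (a+b)/2 = (a'+b')/2 := by linarith
    have hempty : lowerSemicircle a b c ∩ lowerSemicircle a' b' c = ∅ := by
      ext p
      simp only [Set.mem_inter_iff, Set.mem_empty_iff_false, iff_false, not_and]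
      rintro ⟨h1, -⟩ ⟨h2, -⟩
      exact hrr (by rw [← h1, ← h2, hcen])
    have hni : ¬ Interleave a b a' b' := by
      rintro (⟨h1, h2, h3⟩ | ⟨h1, h2, h3⟩) <;> linarith
    refine ⟨⟨?_, fun h => absurd h hni⟩, fun h => absurd h hni⟩
    rintro ⟨p, hp, -⟩
    rw [hempty] at hp
    exact absurd hp (Set.notMem_empty p)
  · -- distinct centers
    obtain ⟨d, hd⟩ : ∃ d : ℝ, d = (a'+b')/2 - (a+b)/2 := ⟨_, rfl⟩
    have hdne : d ≠ 0 := by rw [hd]; exact hd0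
    obtain ⟨x₀, hx⟩ : ∃ x₀ : ℝ,
        x₀ = (((b-a)/2)^2 - ((b'-a')/2)^2 + ((a'+b')/2)^2 - ((a+b)/2)^2)/(2*d) := ⟨_, rfl⟩
    obtain ⟨D, hDdef⟩ : ∃ D : ℝ, D = ((b-a)/2)^2 - (x₀-(a+b)/2)^2 := ⟨_, rfl⟩
    have h2 : 2*d*(x₀-(a+b)/2) = ((b-a)/2)^2 - ((b'-a')/2)^2 + d^2 := by
      subst hx; field_simp
      subst hd; ring
    have hPD : 4*d^2*D = (a'-a)*(b-a')*(b'-b)*(b'-a) := by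
      rw [hDdef]; subst hd
      linear_combination (-(2*(((a'+b')/2 - (a+b)/2))*(x₀-(a+b)/2) +
        ((b-a)/2)^2-((b'-a')/2)^2+((a'+b')/2 - (a+b)/2)^2)) * h2
    have hP : Interleave a b a' b' ↔ 0 < 4*d^2*D := by
      rw [interleave_iff_prod_pos a b a' b' hab hab', ← hPD]
    -- membership characterization
    have hkey : ∀ x y : ℝ,
        planePoint x y ∈ lowerSemicircle a b c ∩ lowerSemicircle a' b' c ↔
          (x = x₀ ∧ (y-c)^2 = D ∧ y ≤ c) := by
      intro x y
      rw [Set.mem_inter_iff, mem_lowerSemicircle a b c x y hab,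
        mem_lowerSemicircle a' b' c x y hab']
      constructor
      · rintro ⟨⟨e1, hy⟩, e2, -⟩
        have hx' : 2*d*x = 2*d*x₀ := by
          linear_combination e1 - e2 - h2 + (2*x - d - (a+b)/2 - (a'+b')/2) * hd
        have hxx : x = x₀ := mul_left_cancel₀ (mul_ne_zero two_ne_zero hdne) hx'
        subst hxx
        exact ⟨rfl, by rw [hDdef]; linarith, hy⟩
      · rintro ⟨rfl, hy, hyc⟩
        refine ⟨⟨?_, hyc⟩, ?_, hyc⟩
        · rw [hy, hDdef]; ring
        · linear_combination hy + hDdef - h2 + (2*x - d - (a+b)/2 - (a'+b')/2) * hd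
    have hmem : ∀ p : EuclideanSpace ℝ (Fin 2),
        p ∈ lowerSemicircle a b c ∩ lowerSemicircle a' b' c ↔
          (p 0 = x₀ ∧ (p 1 - c)^2 = D ∧ p 1 ≤ c) := by
      intro p
      constructor
      · intro h
        exact (hkey (p 0) (p 1)).1 (by rw [← point_eq p]; exact h)
      · intro h
        have := (hkey (p 0) (p 1)).2 h
        rwa [← point_eq p] at this
    rcases lt_trichotomy D 0 with hD | hD | hD
    · -- no intersection
      have hni : ¬ Interleave a b a' b' := by
        intro h
        have := hP.1 h
        nlinarith [sq_nonneg d]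
      refine ⟨⟨?_, fun h => absurd h hni⟩, fun h => absurd h hni⟩
      rintro ⟨p, hp, -⟩
      obtain ⟨-, hy, -⟩ := (hmem p).1 hp
      nlinarith [sq_nonneg (p 1 - c)]
    · -- tangent
      have hni : ¬ Interleave a b a' b' := by
        intro h
        have := hP.1 h
        rw [hD] at this
        simp at this
      refine ⟨⟨?_, fun h => absurd h hni⟩, fun h => absurd h hni⟩
      rintro ⟨p, hp, hlt⟩
      obtain ⟨-, hy, -⟩ := (hmem p).1 hp
      rw [hD] at hy
      nlinarith [mul_pos (show 0 < c - p 1 by linarith) (show 0 < c - p 1 by linarith)]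
    · -- proper crossing
      have hint : Interleave a b a' b' := hP.2 (by positivity)
      have hs0 : 0 < Real.sqrt D := Real.sqrt_pos.2 hD
      have hy₀ : (planePoint x₀ (c - Real.sqrt D)) 1 = c - Real.sqrt D := rfl
      have hlt : (planePoint x₀ (c - Real.sqrt D)) 1 < c := by rw [hy₀]; linarith
      have hseteq : lowerSemicircle a b c ∩ lowerSemicircle a' b' c
          = {planePoint x₀ (c - Real.sqrt D)} := by
        ext p
        rw [hmem p, Set.mem_singleton_iff]
        constructor
        · rintro ⟨h0, hy, hyc⟩
          have h1 : (c - p 1)^2 = D := by linear_combination hy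
          have h2' : c - p 1 = Real.sqrt D := by
            rw [← Real.sqrt_sq (by linarith : (0:ℝ) ≤ c - p 1), h1]
          have h3 : p 1 = c - Real.sqrt D := by linarith
          rw [point_eq p, h0, h3]
        · rintro rfl
          refine ⟨rfl, ?_, by rw [hy₀]; linarith⟩
          rw [hy₀]
          rw [show (c - Real.sqrt D - c)^2 = Real.sqrt D ^ 2 by ring,
            Real.sq_sqrt hD.le]
      have hmemp : planePoint x₀ (c - Real.sqrt D)
          ∈ lowerSemicircle a b c ∩ lowerSemicircle a' b' c := by
        rw [hseteq]; exact Set.mem_singleton _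
      exact ⟨⟨fun _ => hint, fun _ => ⟨_, hmemp, hlt⟩⟩, fun _ => ⟨_, hseteq, hlt⟩⟩
end

section
/- Fix an integer n ≥ 1 and define x_n(i,j) = (i−1)/n + j/(n(n+1)); for integers 1 ≤ i₁ < i₂ ≤ n set L_n(i₁,i₂) = x_n(i₁, i₁ + n + 1 − i₂) and R_n(i₁,i₂) = x_n(i₂, i₂ − i₁). Then: (1) for every 1 ≤ i₁ < i₂ ≤ n, the second arguments satisfy 1 ≤ i₁ + n + 1 − i₂ ≤ n and 1 ≤ i₂ − i₁ ≤ n, and L_n(i₁,i₂) < R_n(i₁,i₂); and (2) for all 1 ≤ i₁ < i₂ ≤ n and 1 ≤ i₃ < i₄ ≤ n with (i₁,i₂) ≠ (i₃,i₄), the real pairs (L_n(i₁,i₂), R_n(i₁,i₂)) and (L_n(i₃,i₄), R_n(i₃,i₄)) interleave if and only if i₁ < i₃ < i₂ < i₄ or i₃ < i₁ < i₄ < i₂. -/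
/-- The `x`-coordinate `x_n(i, j) = (i - 1)/n + j/(n(n+1))` of the marked point `v_{ij}`
used in the construction of the drawing `D_n`. -/
noncomputable def xCoord (n i j : ℕ) : ℝ :=
  ((i : ℝ) - 1) / n + (j : ℝ) / (n * (n + 1))

/-- The `x`-coordinate of the left endpoint of the semicircle for the edge
`v_{i₁} v_{i₂}`: `L_n(i₁, i₂) = x_n(i₁, i₁ + n + 1 - i₂)`. -/
noncomputable def leftEnd (n i₁ i₂ : ℕ) : ℝ :=
  xCoord n i₁ (i₁ + n + 1 - i₂)

/-- The `x`-coordinate of the right endpoint of the semicircle for the edge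
`v_{i₁} v_{i₂}`: `R_n(i₁, i₂) = x_n(i₂, i₂ - i₁)`. -/
noncomputable def rightEnd (n i₁ i₂ : ℕ) : ℝ :=
  xCoord n i₂ (i₂ - i₁)

lemma leftEnd_eq (n i₁ i₂ : ℕ) (hn : 1 ≤ n) (h2 : i₂ ≤ i₁ + n + 1) :
    leftEnd n i₁ i₂ = (((i₁ : ℤ) * (n + 2) - i₂ : ℤ) : ℝ) / (n * (n + 1)) := by
  have hn0 : (n : ℝ) ≠ 0 := by positivity
  have hn1 : (n : ℝ) + 1 ≠ 0 := by positivity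
  have hc : ((i₁ + n + 1 - i₂ : ℕ) : ℝ) = (i₁ : ℝ) + n + 1 - i₂ := by
    have := (Nat.cast_sub h2 : ((i₁ + n + 1 - i₂ : ℕ) : ℝ) = _)
    push_cast at this ⊢
    linarith [this]
  unfold leftEnd xCoord
  rw [hc]
  push_cast
  field_simp
  ring

lemma rightEnd_eq (n i₁ i₂ : ℕ) (hn : 1 ≤ n) (h : i₁ ≤ i₂) :
    rightEnd n i₁ i₂ = (((i₂ : ℤ) * (n + 2) - i₁ - (n + 1) : ℤ) : ℝ) / (n * (n + 1)) := by
  have hn0 : (n : ℝ) ≠ 0 := by positivity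
  have hn1 : (n : ℝ) + 1 ≠ 0 := by positivity
  have hc : ((i₂ - i₁ : ℕ) : ℝ) = (i₂ : ℝ) - i₁ := by
    exact_mod_cast (Nat.cast_sub h : ((i₂ - i₁ : ℕ) : ℝ) = _)
  unfold rightEnd xCoord
  rw [hc]
  push_cast
  field_simp
  ring

lemma core_fwd (n a b c d : ℤ) (hn : 1 ≤ n) (ha : 1 ≤ a) (hab : a < b) (hb : b ≤ n)
    (hc : 1 ≤ c) (hcd : c < d) (hd : d ≤ n)
    (h1 : a * (n + 2) - b < c * (n + 2) - d)
    (h2 : c * (n + 2) - d < b * (n + 2) - a - (n + 1))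
    (h3 : b * (n + 2) - a - (n + 1) < d * (n + 2) - c - (n + 1)) :
    a < c ∧ c < b ∧ b < d := by
  have hn2 : (0 : ℤ) ≤ n + 2 := by linarith
  have hac : a ≤ c := by
    by_contra h
    push_neg at h
    have := mul_le_mul_of_nonneg_right (show c - a ≤ -1 by linarith) hn2
    nlinarith
  have hbd : b ≤ d := by
    by_contra h
    push_neg at h
    have := mul_le_mul_of_nonneg_right (show d - b ≤ -1 by linarith) hn2
    nlinarith
  have hcb : c < b := by
    by_contra h
    push_neg at h
    have := mul_le_mul_of_nonneg_right (show b - c ≤ 0 by linarith) hn2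
    nlinarith
  have hac' : a < c := by
    rcases lt_or_eq_of_le hac with h | h
    · exact h
    · subst h
      have hdb : d < b := by nlinarith
      have := mul_le_mul_of_nonneg_right (show d - b ≤ -1 by linarith) hn2
      nlinarith
  have hbd' : b < d := by
    rcases lt_or_eq_of_le hbd with h | h
    · exact h
    · subst h
      nlinarith
  exact ⟨hac', hcb, hbd'⟩

lemma core_bwd (n a b c d : ℤ) (hn : 1 ≤ n) (ha : 1 ≤ a) (hab : a < b) (hb : b ≤ n)
    (hc : 1 ≤ c) (hcd : c < d) (hd : d ≤ n)
    (g1 : a < c) (g2 : c < b) (g3 : b < d) :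
    a * (n + 2) - b < c * (n + 2) - d ∧
    c * (n + 2) - d < b * (n + 2) - a - (n + 1) ∧
    b * (n + 2) - a - (n + 1) < d * (n + 2) - c - (n + 1) := by
  have hn2 : (0 : ℤ) ≤ n + 2 := by linarith
  refine ⟨?_, ?_, ?_⟩
  · have := mul_le_mul_of_nonneg_right (show 1 ≤ c - a by linarith) hn2
    nlinarith
  · have := mul_le_mul_of_nonneg_right (show 1 ≤ b - c by linarith) hn2
    nlinarith
  · have := mul_le_mul_of_nonneg_right (show 1 ≤ d - b by linarith) hn2
    nlinarith

lemma lr_lt (n a b : ℤ) (hn : 1 ≤ n) (hab : a < b) :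
    a * (n + 2) - b < b * (n + 2) - a - (n + 1) := by
  have := mul_le_mul_of_nonneg_right (show 1 ≤ b - a by linarith) (show (0:ℤ) ≤ n + 2 by linarith)
  nlinarith

/-- (1) For `1 ≤ i₁ < i₂ ≤ n`, the second arguments `i₁ + n + 1 - i₂` and `i₂ - i₁` lie
in `{1, …, n}` and `L_n(i₁, i₂) < R_n(i₁, i₂)`; (2) for two distinct index pairs
`(i₁, i₂) ≠ (i₃, i₄)`, the real pairs `(L_n(i₁,i₂), R_n(i₁,i₂))` and
`(L_n(i₃,i₄), R_n(i₃,i₄))` interleave if and only if `i₁ < i₃ < i₂ < i₄` or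
`i₃ < i₁ < i₄ < i₂`. -/
theorem semicircle_endpoints_properties (n : ℕ) (hn : 1 ≤ n) :
    (∀ i₁ i₂ : ℕ, 1 ≤ i₁ → i₁ < i₂ → i₂ ≤ n →
      1 ≤ i₁ + n + 1 - i₂ ∧ i₁ + n + 1 - i₂ ≤ n ∧
      1 ≤ i₂ - i₁ ∧ i₂ - i₁ ≤ n ∧
      leftEnd n i₁ i₂ < rightEnd n i₁ i₂) ∧
    (∀ i₁ i₂ i₃ i₄ : ℕ, 1 ≤ i₁ → i₁ < i₂ → i₂ ≤ n → 1 ≤ i₃ → i₃ < i₄ → i₄ ≤ n →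
      (i₁, i₂) ≠ (i₃, i₄) →
      (Interleave (leftEnd n i₁ i₂) (rightEnd n i₁ i₂)
          (leftEnd n i₃ i₄) (rightEnd n i₃ i₄) ↔
        (i₁ < i₃ ∧ i₃ < i₂ ∧ i₂ < i₄) ∨ (i₃ < i₁ ∧ i₁ < i₄ ∧ i₄ < i₂))) := by
  have hD : (0 : ℝ) < n * (n + 1) := by positivity
  have hdiv : ∀ x y : ℤ, ((x : ℝ) / (n * (n + 1)) < (y : ℝ) / (n * (n + 1))) ↔ x < y := by
    intro x y
    rw [div_lt_div_iff_of_pos_right hD]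
    exact_mod_cast Iff.rfl
  constructor
  · intro i₁ i₂ h1 h12 h2n
    refine ⟨by omega, by omega, by omega, by omega, ?_⟩
    rw [leftEnd_eq n i₁ i₂ hn (by omega), rightEnd_eq n i₁ i₂ hn (by omega), hdiv]
    exact lr_lt n i₁ i₂ (by exact_mod_cast hn) (by exact_mod_cast h12)
  · intro i₁ i₂ i₃ i₄ h1 h12 h2n h3 h34 h4n _
    rw [Interleave,
      leftEnd_eq n i₁ i₂ hn (by omega), rightEnd_eq n i₁ i₂ hn (by omega),
      leftEnd_eq n i₃ i₄ hn (by omega), rightEnd_eq n i₃ i₄ hn (by omega),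
      hdiv, hdiv, hdiv, hdiv, hdiv, hdiv]
    have ha : (1 : ℤ) ≤ i₁ := by exact_mod_cast h1
    have hab : (i₁ : ℤ) < i₂ := by exact_mod_cast h12
    have hb : (i₂ : ℤ) ≤ n := by exact_mod_cast h2n
    have hc : (1 : ℤ) ≤ i₃ := by exact_mod_cast h3
    have hcd : (i₃ : ℤ) < i₄ := by exact_mod_cast h34
    have hd : (i₄ : ℤ) ≤ n := by exact_mod_cast h4n
    have hnz : (1 : ℤ) ≤ n := by exact_mod_cast hn
    constructor
    · rintro (⟨u1, u2, u3⟩ | ⟨u1, u2, u3⟩)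
      · left
        have := core_fwd n i₁ i₂ i₃ i₄ hnz ha hab hb hc hcd hd u1 u2 u3
        exact ⟨by exact_mod_cast this.1, by exact_mod_cast this.2.1, by exact_mod_cast this.2.2⟩
      · right
        have := core_fwd n i₃ i₄ i₁ i₂ hnz hc hcd hd ha hab hb u1 u2 u3
        exact ⟨by exact_mod_cast this.1, by exact_mod_cast this.2.1, by exact_mod_cast this.2.2⟩
    · rintro (⟨g1, g2, g3⟩ | ⟨g1, g2, g3⟩)
      · left
        exact core_bwd n i₁ i₂ i₃ i₄ hnz ha hab hb hc hcd hd
          (by exact_mod_cast g1) (by exact_mod_cast g2) (by exact_mod_cast g3)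
      · right
        exact core_bwd n i₃ i₄ i₁ i₂ hnz hc hcd hd ha hab hb
          (by exact_mod_cast g1) (by exact_mod_cast g2) (by exact_mod_cast g3)
end

section
/- Let k ≥ 3 and let c : ZMod k → ℕ be an injective map (a combinatorial cycle visiting k distinct labels). For t ∈ ZMod k write e_t = {c(t), c(t+1)} for the t-th edge of the cycle. Assume that no two of the edges e_s, e_t interleave. Let d : Fin k → ℕ be the strictly increasing enumeration of the image of c. Then the edge set of the cycle is exactly that of the monotone cycle on its support: {e_t : t ∈ ZMod k} = {{d(s), d(s+1)} : 0 ≤ s < k−1} ∪ {{d(0), d(k−1)}}. (This is the fact that a cycle none of whose chords interleave must visit its vertices in increasing order, up to rotation and reflection.) -/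
/-!
Removing the edge `{u, v}` (with `u < v`) from the cycle leaves a path through all other
vertices. Two consecutive vertices of that path cannot have one value strictly between `u`
and `v` and the other outside `[u, v]`, since their edge would interleave `{u, v}`; so the
path stays on one side. Either every value lies in `[u, v]`, and `{u, v}` is the closing edge
`{min, max}` of the monotone cycle, or no value lies strictly between `u` and `v`, and they are
consecutive in the sorted order. Thus every edge of the cycle is an edge of the monotone cycle;
since a cycle of length `k ≥ 3` has `k` distinct edges and the monotone cycle has at most `k`,
the two edge sets agree.
-/

/-- Two 2-element sets of naturals, written as `{a, b}` with `a < b` and `{a', b'}` with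
`a' < b'`, interleave if `a < a' < b < b'` or `a' < a < b' < b`. -/
def NatInterleave (a b a' b' : ℕ) : Prop :=
  (a < a' ∧ a' < b ∧ b < b') ∨ (a' < a ∧ a < b' ∧ b' < b)

open Set Function

def IsNoninterleaving {k : ℕ} (c : ZMod k → ℕ) : Prop :=
  ∀ s t : ZMod k, ∀ a b a' b' : ℕ, a < b → a' < b' →
    ({c s, c (s + 1)} : Finset ℕ) = {a, b} →
    ({c t, c (t + 1)} : Finset ℕ) = {a', b'} →
    ¬ NatInterleave a b a' b'

lemma Finset.pair_eq_min_max {α : Type*} [LinearOrder α] (u v : α) :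
    ({u, v} : Finset α) = {min u v, max u v} := by
  rcases le_total u v with h | h
  · rw [min_eq_left h, max_eq_right h]
  · rw [min_eq_right h, max_eq_left h, Finset.pair_comm]

lemma Set.setOf_exists_succ_le_eq_range {α : Type*} {n : ℕ}
    (f : (s : ℕ) → s + 1 ≤ n → α) :
    {e | ∃ s : ℕ, ∃ h : s + 1 ≤ n, e = f s h} = range fun s : Fin n => f s s.2 := by
  ext e
  simp [Fin.exists_iff, eq_comm]

namespace ZMod

variable {k : ℕ}

lemma natCast_ne_natCast_of_lt {i j : ℕ} (hi : i < k) (hj : j < k) (hij : i ≠ j) :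
    (i : ZMod k) ≠ j := by
  rwa [Ne, natCast_eq_natCast_iff', Nat.mod_eq_of_lt hi, Nat.mod_eq_of_lt hj]

/-- `t + 2, t + 3, …, t + (k - 1)` is the path left after deleting the edge `{t, t + 1}` from
the cycle. -/
lemma iff_of_forall_iff_add_one [NeZero k] {P : ZMod k → Prop} {t : ZMod k}
    (hstep : ∀ j : ℕ, 2 ≤ j → j + 1 < k → (P (t + j) ↔ P (t + (j + 1 : ℕ))))
    {s : ZMod k} (hs : s ≠ t) (hs' : s ≠ t + 1) : P s ↔ P (t + (2 : ℕ)) := by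
  have hpath : ∀ j : ℕ, 2 ≤ j → j < k → (P (t + j) ↔ P (t + (2 : ℕ))) := by
    intro j hj
    induction j, hj using Nat.le_induction with
    | base => exact fun _ => Iff.rfl
    | succ j hj ih => exact fun hjk => (hstep j hj hjk).symm.trans (ih (by omega))
  obtain ⟨j, hjk, rfl⟩ : ∃ j < k, s = t + j := ⟨(s - t).val, val_lt _, by simp⟩
  refine hpath j ?_ hjk
  by_contra hj
  interval_cases j
  · exact hs (by simp)
  · exact hs' (by simp)

lemma add_natCast_ne_self_and_ne_add_one {t : ZMod k} {j : ℕ} (hj : 2 ≤ j) (hjk : j < k) :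
    t + j ≠ t ∧ t + j ≠ t + 1 := by
  constructor <;> intro h
  · exact natCast_ne_natCast_of_lt hjk (by omega) (by omega : j ≠ 0) (by simpa using h)
  · exact natCast_ne_natCast_of_lt hjk (by omega) (by omega : j ≠ 1) (by simpa using h)

lemma injective_pair_self_add_one {α : Type*} [DecidableEq α] (hk : 3 ≤ k) {c : ZMod k → α}
    (hinj : Injective c) : Injective fun t : ZMod k => ({c t, c (t + 1)} : Finset α) := by
  have : Fact (1 < k) := ⟨by omega⟩
  have htwo : (2 : ZMod k) ≠ 0 := by
    simpa using natCast_ne_natCast_of_lt (k := k) (i := 2) (j := 0) (by omega) (by omega)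
      two_ne_zero
  intro s t (hst : ({c s, c (s + 1)} : Finset α) = {c t, c (t + 1)})
  have hs : c s ∈ ({c t, c (t + 1)} : Finset α) := hst ▸ Finset.mem_insert_self _ _
  have hs' : c (s + 1) ∈ ({c t, c (t + 1)} : Finset α) := hst ▸ by simp
  simp only [Finset.mem_insert, Finset.mem_singleton, hinj.eq_iff] at hs hs'
  rcases hs with rfl | rfl
  · rfl
  · rcases hs' with h | h
    · exact absurd (by linear_combination h) htwo
    · exact absurd (by linear_combination h) one_ne_zero

end ZMod

namespace StrictMono

variable {α : Type*} [Preorder α] {k : ℕ} {d : Fin k → α}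

lemma val_eq_zero_and_val_eq_of_range_subset_Icc (hd : StrictMono d) {i j : Fin k}
    (h : range d ⊆ Icc (d i) (d j)) : (i : ℕ) = 0 ∧ (j : ℕ) = k - 1 := by
  have hk := i.pos
  have hfirst := (h (mem_range_self ⟨0, by omega⟩)).1
  have hlast := (h (mem_range_self ⟨k - 1, by omega⟩)).2
  simp only [hd.le_iff_le, Fin.le_def] at hfirst hlast
  omega

lemma val_eq_succ_of_disjoint_Ioo (hd : StrictMono d) {i j : Fin k} (hij : i < j)
    (h : Disjoint (range d) (Ioo (d i) (d j))) : (j : ℕ) = i + 1 := by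
  by_contra hne
  rw [Fin.lt_def] at hij
  refine disjoint_left.1 h (mem_range_self ⟨i + 1, by omega⟩) ⟨hd ?_, hd ?_⟩ <;>
    simp only [Fin.lt_def] <;> omega

end StrictMono

namespace IsNoninterleaving

variable {k : ℕ} {c : ZMod k → ℕ}

lemma mem_Icc_of_mem_Ioo (hc : IsNoninterleaving c) {s t : ZMod k} {x y : ℕ}
    (hxy : ({c s, c (s + 1)} : Finset ℕ) = {x, y})
    (hx : x ∈ Ioo (min (c t) (c (t + 1))) (max (c t) (c (t + 1)))) :
    y ∈ Icc (min (c t) (c (t + 1))) (max (c t) (c (t + 1))) := by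
  rw [mem_Ioo] at hx
  rw [mem_Icc]
  by_contra hy
  refine hc t s _ _ (min x y) (max x y) (hx.1.trans hx.2) (by omega)
    (Finset.pair_eq_min_max _ _) (hxy.trans (Finset.pair_eq_min_max x y)) ?_
  unfold NatInterleave
  omega

lemma mem_Ioo_iff_add_one (hc : IsNoninterleaving c) {s t : ZMod k}
    (hs : c s ≠ c t ∧ c s ≠ c (t + 1)) (hs' : c (s + 1) ≠ c t ∧ c (s + 1) ≠ c (t + 1)) :
    c s ∈ Ioo (min (c t) (c (t + 1))) (max (c t) (c (t + 1))) ↔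
      c (s + 1) ∈ Ioo (min (c t) (c (t + 1))) (max (c t) (c (t + 1))) := by
  have hforward := hc.mem_Icc_of_mem_Ioo (s := s) (t := t) rfl
  have hbackward := hc.mem_Icc_of_mem_Ioo (s := s) (t := t) (Finset.pair_comm _ _)
  simp only [mem_Ioo, mem_Icc] at hforward hbackward ⊢
  omega

lemma range_subset_Icc_or_disjoint_Ioo [NeZero k] (hc : IsNoninterleaving c)
    (hinj : Injective c) (t : ZMod k) :
    range c ⊆ Icc (min (c t) (c (t + 1))) (max (c t) (c (t + 1))) ∨
      Disjoint (range c) (Ioo (min (c t) (c (t + 1))) (max (c t) (c (t + 1)))) := by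
  set u := min (c t) (c (t + 1))
  set v := max (c t) (c (t + 1))
  have hoff : ∀ j : ℕ, 2 ≤ j → j < k → c (t + j) ≠ c t ∧ c (t + j) ≠ c (t + 1) :=
    fun j hj hjk => (ZMod.add_natCast_ne_self_and_ne_add_one hj hjk).imp hinj.ne hinj.ne
  have hstep : ∀ j : ℕ, 2 ≤ j → j + 1 < k →
      (c (t + j) ∈ Ioo u v ↔ c (t + (j + 1 : ℕ)) ∈ Ioo u v) := by
    intro j hj hjk
    rw [Nat.cast_succ, ← add_assoc]
    exact hc.mem_Ioo_iff_add_one (hoff j hj (by omega))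
      (by simpa [add_assoc] using hoff (j + 1) (by omega) hjk)
  have hends : c t ∉ Ioo u v ∧ c (t + 1) ∉ Ioo u v := by
    simp only [mem_Ioo]
    omega
  have hconst :
      ∀ s, s ≠ t → s ≠ t + 1 → (c s ∈ Ioo u v ↔ c (t + (2 : ℕ)) ∈ Ioo u v) :=
    fun s => ZMod.iff_of_forall_iff_add_one (P := fun s => c s ∈ Ioo u v) hstep
  by_cases hin : c (t + (2 : ℕ)) ∈ Ioo u v
  · left
    rintro _ ⟨s, rfl⟩
    by_cases hs : s = t
    · subst hs
      exact ⟨min_le_left _ _, le_max_left _ _⟩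
    by_cases hs' : s = t + 1
    · subst hs'
      exact ⟨min_le_right _ _, le_max_right _ _⟩
    exact Ioo_subset_Icc_self ((hconst s hs hs').2 hin)
  · right
    refine disjoint_left.2 ?_
    rintro _ ⟨s, rfl⟩
    by_cases hs : s = t
    · exact hs ▸ hends.1
    by_cases hs' : s = t + 1
    · exact hs' ▸ hends.2
    exact (hconst s hs hs').not.2 hin

lemma exists_edge_eq (hk : 2 ≤ k) (hc : IsNoninterleaving c) (hinj : Injective c)
    {d : Fin k → ℕ} (hd : StrictMono d) (hrange : range d = range c) (t : ZMod k) :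
    ∃ i j : Fin k, ({c t, c (t + 1)} : Finset ℕ) = {d i, d j} ∧
      ((j : ℕ) = i + 1 ∨ (i : ℕ) = 0 ∧ (j : ℕ) = k - 1) := by
  have : NeZero k := ⟨by omega⟩
  have : Fact (1 < k) := ⟨by omega⟩
  have hne : c t ≠ c (t + 1) := fun h => one_ne_zero (left_eq_add.1 (hinj h))
  obtain ⟨i, hi⟩ : min (c t) (c (t + 1)) ∈ range d := hrange ▸ by
    rcases min_choice (c t) (c (t + 1)) with h | h <;> rw [h] <;> exact mem_range_self _
  obtain ⟨j, hj⟩ : max (c t) (c (t + 1)) ∈ range d := hrange ▸ by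
    rcases max_choice (c t) (c (t + 1)) with h | h <;> rw [h] <;> exact mem_range_self _
  have hij : i < j := hd.lt_iff_lt.1 (by rw [hi, hj]; omega)
  refine ⟨i, j, by rw [Finset.pair_eq_min_max, hi, hj], ?_⟩
  rcases hc.range_subset_Icc_or_disjoint_Ioo hinj t with h | h <;>
    rw [← hrange, ← hi, ← hj] at h
  · exact Or.inr (hd.val_eq_zero_and_val_eq_of_range_subset_Icc h)
  · exact Or.inl (hd.val_eq_succ_of_disjoint_Ioo hij h)

end IsNoninterleaving

/-- A combinatorial cycle `c : ZMod k → ℕ` (k ≥ 3, `c` injective) whose edges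
`e_t = {c t, c (t+1)}` pairwise do not interleave must visit its vertex set in
increasing order, up to rotation and reflection: if `d : Fin k → ℕ` is the strictly
increasing enumeration of the image of `c`, then the edge set of the cycle equals
`{{d s, d (s+1)} : 0 ≤ s < k-1} ∪ {{d 0, d (k-1)}}`. -/
theorem noninterleaving_cycle_is_monotone (k : ℕ) (hk : 3 ≤ k)
    (c : ZMod k → ℕ) (hc : Function.Injective c)
    (hnointer : ∀ s t : ZMod k, ∀ a b a' b' : ℕ, a < b → a' < b' →
      ({c s, c (s + 1)} : Finset ℕ) = {a, b} →
      ({c t, c (t + 1)} : Finset ℕ) = {a', b'} →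
      ¬ NatInterleave a b a' b')
    (d : Fin k → ℕ) (hd : StrictMono d) (hrange : Set.range d = Set.range c) :
    {e : Finset ℕ | ∃ t : ZMod k, e = {c t, c (t + 1)}} =
      {e : Finset ℕ | ∃ s : ℕ, ∃ h : s + 1 ≤ k - 1,
          e = {d ⟨s, by omega⟩, d ⟨s + 1, by omega⟩}} ∪
        {({d ⟨0, by omega⟩, d ⟨k - 1, by omega⟩} : Finset ℕ)} := by
  have : NeZero k := ⟨by omega⟩
  have hcycle : {e : Finset ℕ | ∃ t : ZMod k, e = {c t, c (t + 1)}} =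
      range fun t : ZMod k => ({c t, c (t + 1)} : Finset ℕ) := by
    ext e
    simp [eq_comm]
  rw [hcycle, setOf_exists_succ_le_eq_range]
  refine eq_of_subset_of_ncard_le ?_ ?_ ((finite_range _).union (finite_singleton _))
  · rintro _ ⟨t, rfl⟩
    obtain ⟨⟨i, hi⟩, ⟨j, hj⟩, hedge, (rfl | ⟨rfl, rfl⟩)⟩ :=
      IsNoninterleaving.exists_edge_eq (by omega) hnointer hc hd hrange t
    · exact Or.inl ⟨⟨i, by simp only at hj; omega⟩, hedge.symm⟩
    · exact Or.inr hedge
  · calc _ ≤ (k - 1) + 1 := by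
          refine (ncard_union_le _ _).trans (add_le_add ?_ (ncard_singleton _).le)
          rw [← Nat.card_coe_set_eq]
          exact (Finite.card_range_le _).trans_eq (Nat.card_fin _)
      _ = k := by omega
      _ = _ := by
          rw [ncard_range_of_injective (ZMod.injective_pair_self_add_one hk hc), Nat.card_zmod]
end

section
/- Let k ≥ 4 be an even integer and define c : ZMod k → ℕ by c(0) = 1, c(2r−1) = k/2 + 2 − r for 1 ≤ r ≤ k/2, and c(2r) = k + 1 − r for 1 ≤ r ≤ k/2 − 1 (this is the cyclic sequence 1, k/2+1, k, k/2, k−1, k/2−1, k−2, k/2−2, …, k/2+2, 2). Then: (1) c is a bijection from ZMod k onto {1, 2, …, k}; and (2) no two edges of the cycle are strictly nested, i.e., there do not exist s, t ∈ ZMod k and representations {c(s), c(s+1)} = {a,b} with a < b and {c(t), c(t+1)} = {a',b'} with a' < b' such that a < a' < b' < b. (Since in the twisted graph T_m two edges v_i v_j (i<j) and v_k v_l (k<l) cross if and only if i < k < l < j or k < i < j < l, this shows the cycle C₁ = v₁ → v_{k/2+1} → v_k → v_{k/2} → v_{k−1} → v_{k/2−1} → ⋯ → v_{k/2+2} → v₂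 → v₁ used in the proof of Theorem 4 is plane.) -/
/-- The cycle `C₁ : 1 → k/2+1 → k → k/2 → k−1 → k/2−1 → ⋯ → k/2+2 → 2 → 1` used in the
proof of Theorem 4 for the twisted graph: the map `c : ZMod k → ℕ` with `c 0 = 1`,
`c (2r−1) = k/2 + 2 − r` for `1 ≤ r ≤ k/2`, and `c (2r) = k + 1 − r` for
`1 ≤ r ≤ k/2 − 1`, is (1) a bijection from `ZMod k` onto `{1, …, k}`, and (2) no two of
its edges `{c t, c (t+1)}` are strictly nested; hence the cycle is plane in the twisted
graph `T_m`, where two edges cross exactly when their index pairs are strictly nested. -/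
theorem twisted_cycle_is_plane (k : ℕ) (hk : 4 ≤ k) (hke : Even k)
    (c : ZMod k → ℕ)
    (h0 : c 0 = 1)
    (hodd : ∀ r : ℕ, 1 ≤ r → r ≤ k / 2 →
      c ((2 * r - 1 : ℕ) : ZMod k) = k / 2 + 2 - r)
    (heven : ∀ r : ℕ, 1 ≤ r → r ≤ k / 2 - 1 →
      c ((2 * r : ℕ) : ZMod k) = k + 1 - r) :
    (Function.Injective c ∧ Set.range c = Set.Icc 1 k) ∧
    (∀ s t : ZMod k, ∀ a b a' b' : ℕ, a < b → a' < b' →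
      ({c s, c (s + 1)} : Finset ℕ) = {a, b} →
      ({c t, c (t + 1)} : Finset ℕ) = {a', b'} →
      ¬ (a < a' ∧ a' < b' ∧ b' < b)) := by
  haveI : NeZero k := ⟨by omega⟩
  obtain ⟨k2, hk2⟩ := hke
  have hk2' : k = 2 * k2 := by omega
  have hk2ge : 2 ≤ k2 := by omega
  have hhalf : k / 2 = k2 := by omega
  rw [hhalf] at hodd heven
  -- The key per-edge property.
  have hedge : ∀ t : ZMod k, (1 ≤ c t ∧ c t ≤ k) ∧
      (min (c t) (c (t + 1)) = 1 ∨
        k2 - 1 ≤ max (c t) (c (t + 1)) - min (c t) (c (t + 1))) ∧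
      max (c t) (c (t + 1)) - min (c t) (c (t + 1)) ≤ k2 := by
    intro t
    have hn : t.val < k := ZMod.val_lt t
    have ht : ((t.val : ℕ) : ZMod k) = t := ZMod.natCast_rightInverse t
    have ht1 : t + 1 = (((t.val + 1 : ℕ)) : ZMod k) := by
      rw [Nat.cast_add, Nat.cast_one, ht]
    set n := t.val with hndef
    rcases Nat.lt_or_ge n 1 with hn0 | hn1
    · -- n = 0 : edge {1, k2+1}
      have hn0 : n = 0 := by omega
      have hc1 : c t = 1 := by rw [← ht, hn0, Nat.cast_zero, h0]
      have hc2 : c (t + 1) = k2 + 1 := by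
        have := hodd 1 le_rfl (by omega)
        rw [ht1, hn0]
        norm_num at this ⊢
        rw [this]
      rw [hc1, hc2]; refine ⟨⟨le_rfl, by omega⟩, ?_, ?_⟩ <;> omega
    rcases Nat.even_or_odd n with hpar | hpar
    · -- n even, n ≠ 0 : n = 2r, edge {k+1-r, k2+1-r}
      obtain ⟨r, hr⟩ := hpar
      have hr' : n = 2 * r := by omega
      have hr1 : 1 ≤ r := by omega
      have hrk : r ≤ k2 - 1 := by omega
      have hc1 : c t = k + 1 - r := by
        rw [← ht, hr']; exact heven r hr1 hrk
      have hc2 : c (t + 1) = k2 + 1 - r := by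
        have h := hodd (r + 1) (by omega) (by omega)
        have : (2 * (r + 1) - 1 : ℕ) = n + 1 := by omega
        rw [this] at h
        rw [ht1, h]; omega
      rw [hc1, hc2]; refine ⟨⟨by omega, by omega⟩, ?_, ?_⟩ <;> omega
    · -- n odd
      obtain ⟨r, hr⟩ := hpar
      have hr' : n = 2 * (r + 1) - 1 := by omega
      rcases Nat.lt_or_ge n (k - 1) with hlt | hge
      · -- n = 2(r+1)-1 with r+1 ≤ k2-1 : edge {k2+2-(r+1), k+1-(r+1)}
        have hc1 : c t = k2 + 2 - (r + 1) := by
          rw [← ht, hr']; exact hodd (r + 1) (by omega) (by omega)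
        have hc2 : c (t + 1) = k + 1 - (r + 1) := by
          have h := heven (r + 1) (by omega) (by omega)
          have : (2 * (r + 1) : ℕ) = n + 1 := by omega
          rw [this] at h
          rw [ht1, h]
        rw [hc1, hc2]; refine ⟨⟨by omega, by omega⟩, ?_, ?_⟩ <;> omega
      · -- n = k - 1 : edge {2, 1}
        have hnk : n = k - 1 := by omega
        have hc1 : c t = 2 := by
          have h := hodd k2 (by omega) le_rfl
          have : (2 * k2 - 1 : ℕ) = n := by omega
          rw [this, ht] at h
          rw [h]; omega
        have hc2 : c (t + 1) = 1 := by
          have : ((n + 1 : ℕ) : ZMod k) = 0 := by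
            have : (n + 1 : ℕ) = k := by omega
            rw [this, ZMod.natCast_self]
          rw [ht1, this, h0]
        rw [hc1, hc2]; refine ⟨⟨by omega, by omega⟩, ?_, ?_⟩ <;> omega
  -- Surjectivity onto [1, k].
  have hsurj : ∀ v : ℕ, 1 ≤ v → v ≤ k → ∃ t : ZMod k, c t = v := by
    intro v hv1 hvk
    rcases Nat.lt_or_ge v 2 with h | h
    · exact ⟨0, by rw [h0]; omega⟩
    rcases Nat.lt_or_ge v (k2 + 2) with h2 | h2
    · -- v = k2 + 2 - r with r = k2 + 2 - v
      refine ⟨((2 * (k2 + 2 - v) - 1 : ℕ) : ZMod k), ?_⟩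
      rw [hodd (k2 + 2 - v) (by omega) (by omega)]; omega
    · -- v = k + 1 - r with r = k + 1 - v
      refine ⟨((2 * (k + 1 - v) : ℕ) : ZMod k), ?_⟩
      rw [heven (k + 1 - v) (by omega) (by omega)]; omega
  -- Injectivity by counting.
  have hinj : Function.Injective c := by
    intro x y hxy
    refine Finset.inj_on_of_surj_on_of_card_le
      (s := (Finset.univ : Finset (ZMod k))) (t := Finset.Icc 1 k)
      (fun a _ => c a) (fun a _ => ?_) (fun b hb => ?_) ?_
      (Finset.mem_univ x) (Finset.mem_univ y) hxy
    · rcases (hedge a).1 with ⟨h1, h2⟩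
      exact Finset.mem_Icc.2 ⟨h1, h2⟩
    · rcases Finset.mem_Icc.1 hb with ⟨h1, h2⟩
      obtain ⟨t, htv⟩ := hsurj b h1 h2
      exact ⟨t, Finset.mem_univ t, htv⟩
    · rw [Finset.card_univ, ZMod.card, Nat.card_Icc]; omega
  have hrange : Set.range c = Set.Icc 1 k := by
    apply Set.eq_of_subset_of_subset
    · rintro v ⟨t, rfl⟩
      exact Set.mem_Icc.2 ⟨(hedge t).1.1, (hedge t).1.2⟩
    · rintro v hv
      rcases Set.mem_Icc.1 hv with ⟨h1, h2⟩
      obtain ⟨t, htv⟩ := hsurj v h1 h2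
      exact ⟨t, htv⟩
  refine ⟨⟨hinj, hrange⟩, ?_⟩
  -- Part 2: no two edges are strictly nested.
  intro s t a b a' b' hab ha'b' hs ht hnest
  obtain ⟨h1, h2, h3⟩ := hnest
  -- identify min/max of the s-edge with a, b
  have hsa : c s ∈ ({a, b} : Finset ℕ) := by
    rw [← hs]; exact Finset.mem_insert_self _ _
  have hsb : c (s + 1) ∈ ({a, b} : Finset ℕ) := by
    rw [← hs]; exact Finset.mem_insert_of_mem (Finset.mem_singleton_self _)
  have haa : a ∈ ({c s, c (s + 1)} : Finset ℕ) := by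
    rw [hs]; exact Finset.mem_insert_self _ _
  have hbb : b ∈ ({c s, c (s + 1)} : Finset ℕ) := by
    rw [hs]; exact Finset.mem_insert_of_mem (Finset.mem_singleton_self _)
  simp only [Finset.mem_insert, Finset.mem_singleton] at hsa hsb haa hbb
  have hsmin : min (c s) (c (s + 1)) = a ∧ max (c s) (c (s + 1)) = b := by omega
  have hta : c t ∈ ({a', b'} : Finset ℕ) := by
    rw [← ht]; exact Finset.mem_insert_self _ _
  have htb : c (t + 1) ∈ ({a', b'} : Finset ℕ) := by
    rw [← ht]; exact Finset.mem_insert_of_mem (Finset.mem_singleton_self _)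
  have haa' : a' ∈ ({c t, c (t + 1)} : Finset ℕ) := by
    rw [ht]; exact Finset.mem_insert_self _ _
  have hbb' : b' ∈ ({c t, c (t + 1)} : Finset ℕ) := by
    rw [ht]; exact Finset.mem_insert_of_mem (Finset.mem_singleton_self _)
  simp only [Finset.mem_insert, Finset.mem_singleton] at hta htb haa' hbb'
  have htmin : min (c t) (c (t + 1)) = a' ∧ max (c t) (c (t + 1)) = b' := by omega
  have hes := hedge s
  have het := hedge t
  have h1s : 1 ≤ c s := hes.1.1
  have h1t : 1 ≤ c t := het.1.1
  have h1t1 : 1 ≤ c (t + 1) := (hedge (t + 1)).1.1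
  have h1s1 : 1 ≤ c (s + 1) := (hedge (s + 1)).1.1
  obtain ⟨-, hes2, hes3⟩ := hes
  obtain ⟨-, het2, het3⟩ := het
  rw [hsmin.1, hsmin.2] at hes2 hes3
  rw [htmin.1, htmin.2] at het2 het3
  -- a ≥ 1, a' > a so a' ≥ 2, hence b' - a' ≥ k2 - 1; but then b - a ≥ k2 + 1 > k2.
  omega
end
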